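/- Let V = ⊕_{k∈ℤ} V_k be a nonzero finite-dimensional ℤ-graded complex vector space, let B_1, B_{−1} : V → V be linear maps of degrees +1 and −1 respectively with B_1 B_{−1} = B_{−1} B_1, and let ṽ ∈ V_0 be such that the triple is stable (every subspace S ⊆ V with B_1(S) ⊆ S, B_{−1}(S) ⊆ S and ṽ ∈ S equals V). Then there is a unique partition λ and a grading-preserving linear isomorphism g : V^λ → V with g ∘ B_1^λ = B_1 ∘ g, g ∘ B_{−1}^λ = B_{−1} ∘ g and g(b_{0,0}) = ṽ; in particular dim V_k = v_k(λ) for all k, so each quiver variety 𝔐(v) of type A_∞ for the basic representation is either empty or a single point. -/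

import Mathlib

/-- A partition: a non-increasing, eventually-zero sequence of non-negative integers.
`part k` is the `(k+1)`-st part `λ_{k+1}`. -/
structure PartitionSeq : Type where
  part : ℕ → ℕ
  mono : ∀ k, part (k + 1) ≤ part k
  ev_zero : ∃ N : ℕ, ∀ k, N ≤ k → part k = 0

namespace PartitionSeq

/-- The Young diagram of a partition: the box `b = (j, k)` in column `j ≥ 0` and row
`k ≥ 0` belongs to the diagram iff `j < λ_{k+1}`. -/
def diagram (lam : PartitionSeq) : Set (ℕ × ℕ) := {b | b.1 < lam.part b.2}

/-- The size `|λ| = Σ_i λ_i` of a partition. -/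
noncomputable def size (lam : PartitionSeq) : ℕ := ∑ᶠ k : ℕ, lam.part k

end PartitionSeq

/-- The residue `j - k` of the box `b = (j, k)`. -/
def boxResidue (b : ℕ × ℕ) : ℤ := (b.1 : ℤ) - (b.2 : ℤ)

/-- `v_i(λ)`: the number of boxes of the Young diagram of `λ` of residue `i`. -/
noncomputable def boxCount (lam : PartitionSeq) (i : ℤ) : ℕ :=
  {b ∈ lam.diagram | boxResidue b = i}.ncard

/-- The type of boxes of the Young diagram of `lam`. -/
def BoxOf (lam : PartitionSeq) : Type := {b : ℕ × ℕ // b.1 < lam.part b.2}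

/-- `V^λ`: the free `ℂ`-vector space on the boxes of the Young diagram of `lam`,
graded by residue. -/
abbrev YoungSpace (lam : PartitionSeq) : Type := BoxOf lam →₀ ℂ

/-- `B_1^λ`: the degree `+1` endomorphism `b_{j,k} ↦ b_{j+1,k}` (and `0` if the target
box is not in the diagram). -/
noncomputable def YB1 (lam : PartitionSeq) : YoungSpace lam →ₗ[ℂ] YoungSpace lam :=
  Finsupp.lift (YoungSpace lam) ℂ (BoxOf lam) fun b =>
    if h : b.1.1 + 1 < lam.part b.1.2 then Finsupp.single ⟨(b.1.1 + 1, b.1.2), h⟩ 1 else 0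

/-- `B_{-1}^λ`: the degree `-1` endomorphism `b_{j,k} ↦ b_{j,k+1}` (and `0` if the target
box is not in the diagram). -/
noncomputable def YBm1 (lam : PartitionSeq) : YoungSpace lam →ₗ[ℂ] YoungSpace lam :=
  Finsupp.lift (YoungSpace lam) ℂ (BoxOf lam) fun b =>
    if h : b.1.1 < lam.part (b.1.2 + 1) then Finsupp.single ⟨(b.1.1, b.1.2 + 1), h⟩ 1 else 0

/-- `lam` matches the data `(V, B1, Bm1, v)`: there is a grading-preserving linear
isomorphism `g : V^λ ≅ W` intertwining `B_1^λ, B_{-1}^λ` with `B1, Bm1` and sending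
`b_{0,0}` to `v`. -/
def IsYoungIso {W : Type*} [AddCommGroup W] [Module ℂ W] (V : ℤ → Submodule ℂ W)
    (B1 Bm1 : W →ₗ[ℂ] W) (v : W) (lam : PartitionSeq) : Prop :=
  ∃ g : YoungSpace lam ≃ₗ[ℂ] W,
    (∀ b : BoxOf lam, g (Finsupp.single b 1) ∈ V (boxResidue b.1)) ∧
    (g.toLinearMap ∘ₗ YB1 lam = B1 ∘ₗ g.toLinearMap) ∧
    (g.toLinearMap ∘ₗ YBm1 lam = Bm1 ∘ₗ g.toLinearMap) ∧
    ∃ h0 : 0 < lam.part 0, g (Finsupp.single (⟨(0, 0), h0⟩ : BoxOf lam) 1) = v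

/-!
Since `B1` and `B_{-1}` shift the grading of a finite-dimensional space, they are nilpotent.
By stability the vectors `B1^j B_{-1}^k ṽ` span `V`; letting `λ_{k+1}` be the least `j` with
`B1^j B_{-1}^k ṽ = 0` gives a partition whose boxes index exactly the nonzero ones. Those of
residue `r` form one string `u, Tu, T²u, …` for `T = B1 B_{-1}`, hence are linearly independent,
and vectors of distinct degrees are independent, so `b_{j,k} ↦ B1^j B_{-1}^k ṽ` is the required
isomorphism. Conversely any such isomorphism forces `B1^j B_{-1}^k ṽ ≠ 0 ↔ j < λ_{k+1}`, which
gives uniqueness, and a homogeneous basis restricts to bases of the graded pieces, which gives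
`dim V_k = v_k(λ)`.
-/

section Graded

variable {K W : Type*} [Field K] [AddCommGroup W] [Module K W] {V : ℤ → Submodule K W}

theorem pow_apply_mem_of_map_le {C : Module.End K W} {s : ℤ}
    (hC : ∀ k, (V k).map C ≤ V (k + s)) (n : ℕ) {k : ℤ} {x : W} (hx : x ∈ V k) :
    (C ^ n) x ∈ V (k + n * s) := by
  induction n with
  | zero => simpa using hx
  | succ n ih =>
    rw [pow_succ', Module.End.mul_apply, Nat.cast_succ, add_one_mul, ← add_assoc]
    exact hC _ (Submodule.mem_map_of_mem ih)

theorem isNilpotent_of_map_le_shift [FiniteDimensional K W] (hV : DirectSum.IsInternal V)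
    {C : Module.End K W} {s : ℤ} (hs : s ≠ 0) (hC : ∀ k, (V k).map C ≤ V (k + s)) :
    IsNilpotent C := by
  have homogeneous : ∀ k, ∀ x ∈ V k, ∃ n, (C ^ n) x = 0 := by
    intro k x hx
    by_contra! hne
    have hdeg : Function.Injective fun n : ℕ => k + n * s := fun a b hab => by
      simpa [hs] using hab
    have hli := (hV.submodule_iSupIndep.comp hdeg).linearIndependent _
      (fun n => pow_apply_mem_of_map_le hC n hx) hne
    have := hli.finite
    exact not_finite ℕ
  refine Module.End.isNilpotent_iff_of_finite.mpr fun x => ?_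
  have hx : x ∈ ⨆ k, V k := hV.submodule_iSup_eq_top.symm ▸ Submodule.mem_top
  induction hx using Submodule.iSup_induction' with
  | mem k x hx => exact homogeneous k x hx
  | zero => exact ⟨0, rfl⟩
  | add x y _ _ hx hy =>
    obtain ⟨a, ha⟩ := hx
    obtain ⟨b, hb⟩ := hy
    refine ⟨max a b, ?_⟩
    rw [map_add, Module.End.pow_map_zero_of_le (le_max_left a b) ha,
      Module.End.pow_map_zero_of_le (le_max_right a b) hb, add_zero]

theorem linearIndependent_of_homogeneous (hV : iSupIndep V) {ι : Type*} {f : ι → W}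
    {deg : ι → ℤ} (hf : ∀ i, f i ∈ V (deg i))
    (hli : ∀ r, LinearIndependent K fun i : {i // deg i = r} => f i) :
    LinearIndependent K f := by
  have hspan : ∀ r, Submodule.span K (Set.range fun i : {i // deg i = r} => f i) ≤ V r :=
    fun r => Submodule.span_le.mpr <| Set.range_subset_iff.mpr fun i => by simpa [i.2] using hf i
  rw [← linearIndependent_equiv (Equiv.sigmaFiberEquiv deg)]
  refine linearIndependent_iUnion_finite hli fun r t _ hrt => ?_
  refine (hV r).mono (hspan r) (iSup₂_mono' fun r' hr' => ⟨r', ?_, hspan r'⟩)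
  rintro rfl
  exact hrt hr'

theorem finrank_eq_card_of_homogeneous_basis [FiniteDimensional K W]
    (hV : DirectSum.IsInternal V) {ι : Type*} (e : Module.Basis ι K W) {deg : ι → ℤ}
    (he : ∀ i, e i ∈ V (deg i)) (r : ℤ) :
    Module.finrank K (V r) = Nat.card {i // deg i = r} := by
  set U : ℤ → Submodule K W := fun r =>
    Submodule.span K (Set.range fun i : {i // deg i = r} => e i)
  have hUV : U ≤ V := fun r =>
    Submodule.span_le.mpr <| Set.range_subset_iff.mpr fun i => by simpa [i.2] using he i
  have hU : iSup U = ⊤ := by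
    rw [← Submodule.span_iUnion, ← e.span_eq]
    congr 1
    ext x
    simp
  have := Module.Finite.finite_basis e
  have := Fintype.ofFinite ι
  rw [← (hV.submodule_iSupIndep.le_iff_eq_of_iSup_eq_top hU).mp hUV, Nat.card_eq_fintype_card]
  exact finrank_span_eq_card (e.linearIndependent.comp _ Subtype.val_injective)

theorem linearIndependent_fin_pow_apply {T : Module.End K W} :
    ∀ {n : ℕ} {u : W}, (T ^ n) u ≠ 0 → (T ^ (n + 1)) u = 0 →
      LinearIndependent K fun m : Fin (n + 1) => (T ^ (m : ℕ)) u
  | 0, u, hne, _ => by simpa [linearIndependent_unique_iff] using hne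
  | n + 1, u, hne, hzero => by
    have ih : LinearIndependent K fun m : Fin (n + 1) => (T ^ (m : ℕ)) (T u) := by
      refine linearIndependent_fin_pow_apply ?_ ?_ <;>
        rwa [← Module.End.mul_apply, ← pow_succ]
    have hcons : (fun m : Fin (n + 2) => (T ^ (m : ℕ)) u) =
        Fin.cons u fun m : Fin (n + 1) => (T ^ (m : ℕ)) (T u) := by
      ext m
      refine Fin.cases rfl (fun m => ?_) m
      simp [pow_succ]
    have hker : Submodule.span K (Set.range fun m : Fin (n + 1) => (T ^ (m : ℕ)) (T u)) ≤
        LinearMap.ker (T ^ (n + 1)) := by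
      refine Submodule.span_le.mpr <| Set.range_subset_iff.mpr fun m => ?_
      simp only [SetLike.mem_coe, LinearMap.mem_ker, ← Module.End.mul_apply, ← pow_succ,
        ← pow_add]
      exact Module.End.pow_map_zero_of_le (by omega) hzero
    rw [hcons, linearIndependent_finCons]
    exact ⟨ih, fun hu => hne (hker hu)⟩

theorem linearIndependent_pow_apply_ne_zero {T : Module.End K W} (hT : IsNilpotent T) (u : W) :
    LinearIndependent K fun m : {m : ℕ // (T ^ m) u ≠ 0} => (T ^ (m : ℕ)) u := by
  classical
  obtain ⟨N, hN⟩ := hT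
  have hvanish : ∃ n, (T ^ n) u = 0 := ⟨N, by simp [hN]⟩
  rcases hn : Nat.find hvanish with _ | n
  · have : IsEmpty {m : ℕ // (T ^ m) u ≠ 0} := ⟨fun m =>
      m.2 (Module.End.pow_map_zero_of_le m.1.zero_le (hn ▸ Nat.find_spec hvanish))⟩
    exact linearIndependent_empty_type
  have hne : (T ^ n) u ≠ 0 := Nat.find_min hvanish (by omega)
  have hzero : (T ^ (n + 1)) u = 0 := hn ▸ Nat.find_spec hvanish
  let toFin (m : {m : ℕ // (T ^ m) u ≠ 0}) : Fin (n + 1) :=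
    ⟨m, by_contra fun h => m.2 (Module.End.pow_map_zero_of_le (not_lt.mp h) hzero)⟩
  exact (linearIndependent_fin_pow_apply hne hzero).comp toFin
    fun a b hab => Subtype.ext (congrArg Fin.val hab)

end Graded

attribute [ext] PartitionSeq

section YoungSpace

variable (lam : PartitionSeq)

theorem YB1_single (b : BoxOf lam) :
    YB1 lam (Finsupp.single b 1) =
      (if h : b.1.1 + 1 < lam.part b.1.2 then
        Finsupp.single (⟨(b.1.1 + 1, b.1.2), h⟩ : BoxOf lam) 1 else 0 : YoungSpace lam) := by
  simp [YB1]

theorem YBm1_single (b : BoxOf lam) :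
    YBm1 lam (Finsupp.single b 1) =
      (if h : b.1.1 < lam.part (b.1.2 + 1) then
        Finsupp.single (⟨(b.1.1, b.1.2 + 1), h⟩ : BoxOf lam) 1 else 0 : YoungSpace lam) := by
  simp [YBm1]

theorem YBm1_pow_single_zero (h0 : 0 < lam.part 0) (k : ℕ) :
    (YBm1 lam ^ k) (Finsupp.single (⟨(0, 0), h0⟩ : BoxOf lam) 1) =
      (if h : 0 < lam.part k then Finsupp.single (⟨(0, k), h⟩ : BoxOf lam) 1 else 0 :
        YoungSpace lam) := by
  induction k with
  | zero => simp [h0]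
  | succ k ih =>
    rw [pow_succ', Module.End.mul_apply, ih]
    by_cases hk : 0 < lam.part k
    · rw [dif_pos hk]
      exact YBm1_single lam ⟨(0, k), hk⟩
    · rw [dif_neg hk, map_zero, dif_neg fun h => hk (h.trans_le (lam.mono k))]

theorem YB1_pow_YBm1_pow_single_zero (h0 : 0 < lam.part 0) (j k : ℕ) :
    (YB1 lam ^ j) ((YBm1 lam ^ k) (Finsupp.single (⟨(0, 0), h0⟩ : BoxOf lam) 1)) =
      (if h : j < lam.part k then Finsupp.single (⟨(j, k), h⟩ : BoxOf lam) 1 else 0 :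
        YoungSpace lam) := by
  induction j with
  | zero => exact YBm1_pow_single_zero lam h0 k
  | succ j ih =>
    rw [pow_succ', Module.End.mul_apply, ih]
    by_cases hj : j < lam.part k
    · rw [dif_pos hj]
      exact YB1_single lam ⟨(j, k), hj⟩
    · rw [dif_neg hj, map_zero, dif_neg (by omega)]

end YoungSpace

namespace IsYoungIso

variable {W : Type*} [AddCommGroup W] [Module ℂ W] {V : ℤ → Submodule ℂ W}
  {B1 Bm1 : W →ₗ[ℂ] W} {v : W} {lam : PartitionSeq}

theorem lt_part_iff (h : IsYoungIso V B1 Bm1 v lam) (j k : ℕ) :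
    j < lam.part k ↔ (B1 ^ j) ((Bm1 ^ k) v) ≠ 0 := by
  obtain ⟨g, -, hgB1, hgBm1, h0, rfl⟩ := h
  have hB1 := LinearMap.congr_fun (Module.End.commute_pow_left_of_commute hgB1.symm j)
  have hBm1 := LinearMap.congr_fun (Module.End.commute_pow_left_of_commute hgBm1.symm k)
  simp only [LinearMap.comp_apply, LinearEquiv.coe_coe] at hB1 hBm1
  rw [hBm1, hB1, YB1_pow_YBm1_pow_single_zero]
  split_ifs with hjk
  · simp only [hjk, true_iff, ne_eq, LinearEquiv.map_eq_zero_iff]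
    exact Finsupp.single_ne_zero.mpr one_ne_zero
  · simp [hjk]

theorem unique (h : IsYoungIso V B1 Bm1 v lam) {lam' : PartitionSeq}
    (h' : IsYoungIso V B1 Bm1 v lam') : lam = lam' := by
  ext k : 2
  exact eq_of_forall_lt_iff fun j => (h.lt_part_iff j k).trans (h'.lt_part_iff j k).symm

theorem finrank_eq_boxCount [FiniteDimensional ℂ W] (hV : DirectSum.IsInternal V)
    (h : IsYoungIso V B1 Bm1 v lam) (r : ℤ) :
    Module.finrank ℂ (V r) = boxCount lam r := by
  obtain ⟨g, hg, -⟩ := h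
  rw [finrank_eq_card_of_homogeneous_basis hV (Module.Basis.ofRepr g.symm)
    (deg := fun b => boxResidue b.1) (by simpa using hg) r, boxCount, ← Nat.card_coe_set_eq]
  exact Nat.card_congr (Equiv.subtypeSubtypeEquivSubtypeInter
    (fun b : ℕ × ℕ => b.1 < lam.part b.2) (fun b => boxResidue b = r))

end IsYoungIso

section BoxVectors

variable {W : Type*} [AddCommGroup W] [Module ℂ W] {B1 Bm1 : W →ₗ[ℂ] W} {v : W}

variable (B1 Bm1 v) in
def boxVector (j k : ℕ) : W := (B1 ^ j) ((Bm1 ^ k) v)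

theorem boxVector_succ_left (j k : ℕ) :
    boxVector B1 Bm1 v (j + 1) k = B1 (boxVector B1 Bm1 v j k) := by
  rw [boxVector, pow_succ', Module.End.mul_apply, boxVector]

theorem boxVector_succ_right (hcomm : Commute B1 Bm1) (j k : ℕ) :
    boxVector B1 Bm1 v j (k + 1) = Bm1 (boxVector B1 Bm1 v j k) := by
  rw [boxVector, pow_succ', Module.End.mul_apply]
  exact LinearMap.congr_fun (hcomm.pow_left j).eq _

theorem boxVector_add_add (hcomm : Commute B1 Bm1) (j k m : ℕ) :
    boxVector B1 Bm1 v (j + m) (k + m) = ((B1 * Bm1) ^ m) (boxVector B1 Bm1 v j k) := by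
  induction m with
  | zero => rfl
  | succ m ih =>
    rw [← add_assoc, ← add_assoc, boxVector_succ_left, boxVector_succ_right hcomm, ih, pow_succ',
      Module.End.mul_apply, Module.End.mul_apply]

theorem boxVector_mem {V : ℤ → Submodule ℂ W} (hB1 : ∀ k, (V k).map B1 ≤ V (k + 1))
    (hBm1 : ∀ k, (V k).map Bm1 ≤ V (k + -1)) (hv : v ∈ V 0) (j k : ℕ) :
    boxVector B1 Bm1 v j k ∈ V (boxResidue (j, k)) := by
  rw [boxVector]
  convert pow_apply_mem_of_map_le hB1 j (pow_apply_mem_of_map_le hBm1 k hv) using 2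
  simp only [boxResidue]
  ring

theorem span_boxVector_eq_top (hcomm : Commute B1 Bm1)
    (hstab : ∀ S : Submodule ℂ W,
      (∀ x ∈ S, B1 x ∈ S) → (∀ x ∈ S, Bm1 x ∈ S) → v ∈ S → S = ⊤) :
    Submodule.span ℂ (Set.range (Function.uncurry (boxVector B1 Bm1 v))) = ⊤ := by
  set S := Submodule.span ℂ (Set.range (Function.uncurry (boxVector B1 Bm1 v)))
  have hmem (j k : ℕ) : boxVector B1 Bm1 v j k ∈ S := Submodule.subset_span ⟨(j, k), rfl⟩
  have hinvariant (C : W →ₗ[ℂ] W) (hC : ∀ j k, ∃ j' k', C (boxVector B1 Bm1 v j k) =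
      boxVector B1 Bm1 v j' k') (x : W) (hx : x ∈ S) : C x ∈ S := by
    have hmap : S.map C ≤ S := by
      rw [Submodule.map_span, Submodule.span_le]
      rintro _ ⟨_, ⟨⟨j, k⟩, rfl⟩, rfl⟩
      obtain ⟨j', k', h⟩ := hC j k
      exact h ▸ hmem j' k'
    exact hmap (Submodule.mem_map_of_mem hx)
  refine hstab S (hinvariant B1 fun j k => ⟨j + 1, k, (boxVector_succ_left j k).symm⟩)
    (hinvariant Bm1 fun j k => ⟨j, k + 1, (boxVector_succ_right hcomm j k).symm⟩) (hmem 0 0)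

theorem exists_boxVector_eq_zero (hB1 : IsNilpotent B1) (k : ℕ) :
    ∃ n, boxVector B1 Bm1 v n k = 0 := by
  obtain ⟨n, hn⟩ := hB1
  exact ⟨n, by simp [boxVector, hn]⟩

open Classical in
noncomputable def boxPartition (v : W) (hB1 : IsNilpotent B1) (hBm1 : IsNilpotent Bm1)
    (hcomm : Commute B1 Bm1) : PartitionSeq where
  part k := Nat.find (exists_boxVector_eq_zero (v := v) hB1 k)
  mono k := Nat.find_min' _ <| by
    rw [boxVector_succ_right hcomm, Nat.find_spec (exists_boxVector_eq_zero hB1 k), map_zero]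
  ev_zero := by
    obtain ⟨N, hN⟩ := hBm1
    refine ⟨N, fun k hk => (Nat.find_eq_zero _).mpr ?_⟩
    simp [boxVector, Module.End.pow_map_zero_of_le hk (by simp [hN] : (Bm1 ^ N) v = 0)]

theorem lt_boxPartition_part_iff (hB1 : IsNilpotent B1) (hBm1 : IsNilpotent Bm1)
    (hcomm : Commute B1 Bm1) (j k : ℕ) :
    j < (boxPartition v hB1 hBm1 hcomm).part k ↔ boxVector B1 Bm1 v j k ≠ 0 := by
  classical
  simp only [boxPartition]
  rw [Nat.lt_find_iff]
  exact ⟨fun h => h j le_rfl, fun h m hm hzero => h (Module.End.pow_map_zero_of_le hm hzero)⟩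

theorem boxVector_eq_zero_of_part_le (hB1 : IsNilpotent B1) (hBm1 : IsNilpotent Bm1)
    (hcomm : Commute B1 Bm1) {j k : ℕ} (h : (boxPartition v hB1 hBm1 hcomm).part k ≤ j) :
    boxVector B1 Bm1 v j k = 0 := by
  simpa using mt (lt_boxPartition_part_iff hB1 hBm1 hcomm j k).mpr h.not_gt

end BoxVectors

section BoxPartition

variable {W : Type*} [AddCommGroup W] [Module ℂ W] {V : ℤ → Submodule ℂ W}
  {B1 Bm1 : W →ₗ[ℂ] W} {v : W}

theorem linearIndependent_boxVector (hV : iSupIndep V) (hB1 : ∀ k, (V k).map B1 ≤ V (k + 1))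
    (hBm1 : ∀ k, (V k).map Bm1 ≤ V (k + -1)) (hv : v ∈ V 0) (hB1nil : IsNilpotent B1)
    (hBm1nil : IsNilpotent Bm1) (hcomm : Commute B1 Bm1) :
    LinearIndependent ℂ fun b : BoxOf (boxPartition v hB1nil hBm1nil hcomm) =>
      boxVector B1 Bm1 v b.1.1 b.1.2 := by
  refine linearIndependent_of_homogeneous hV (deg := fun b => boxResidue b.1)
    (fun b => boxVector_mem hB1 hBm1 hv _ _) fun r => ?_
  set u := boxVector B1 Bm1 v r.toNat (-r).toNat
  have hstring (b : {b : BoxOf (boxPartition v hB1nil hBm1nil hcomm) // boxResidue b.1 = r}) :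
      boxVector B1 Bm1 v b.1.1.1 b.1.1.2 = ((B1 * Bm1) ^ min b.1.1.1 b.1.1.2) u := by
    have hr : (b.1.1.1 : ℤ) - b.1.1.2 = r := b.2
    rw [← boxVector_add_add hcomm]
    congr 1 <;> omega
  let exponent (b : {b : BoxOf (boxPartition v hB1nil hBm1nil hcomm) // boxResidue b.1 = r}) :
      {m : ℕ // ((B1 * Bm1) ^ m) u ≠ 0} :=
    ⟨min b.1.1.1 b.1.1.2, hstring b ▸ (lt_boxPartition_part_iff _ _ _ _ _).mp b.1.2⟩
  have hinj : Function.Injective exponent := fun a b h => by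
    have hmin : min a.1.1.1 a.1.1.2 = min b.1.1.1 b.1.1.2 := congrArg Subtype.val h
    have ha : (a.1.1.1 : ℤ) - a.1.1.2 = r := a.2
    have hb : (b.1.1.1 : ℤ) - b.1.1.2 = r := b.2
    apply Subtype.ext
    apply Subtype.ext
    ext <;> omega
  convert (linearIndependent_pow_apply_ne_zero (hcomm.isNilpotent_mul_left hBm1nil) u).comp
    exponent hinj using 1
  exact funext hstring

theorem isYoungIso_boxPartition (hV : iSupIndep V) (hB1 : ∀ k, (V k).map B1 ≤ V (k + 1))
    (hBm1 : ∀ k, (V k).map Bm1 ≤ V (k + -1)) (hv : v ∈ V 0) (hv0 : v ≠ 0)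
    (hB1nil : IsNilpotent B1) (hBm1nil : IsNilpotent Bm1) (hcomm : Commute B1 Bm1)
    (hstab : ∀ S : Submodule ℂ W,
      (∀ x ∈ S, B1 x ∈ S) → (∀ x ∈ S, Bm1 x ∈ S) → v ∈ S → S = ⊤) :
    IsYoungIso V B1 Bm1 v (boxPartition v hB1nil hBm1nil hcomm) := by
  set lam := boxPartition v hB1nil hBm1nil hcomm
  have hspan : ⊤ ≤ Submodule.span ℂ
      (Set.range fun b : BoxOf lam => boxVector B1 Bm1 v b.1.1 b.1.2) := by
    rw [← span_boxVector_eq_top hcomm hstab, Submodule.span_le]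
    rintro _ ⟨⟨j, k⟩, rfl⟩
    by_cases h : j < lam.part k
    · exact Submodule.subset_span ⟨⟨(j, k), h⟩, rfl⟩
    · simp [boxVector_eq_zero_of_part_le hB1nil hBm1nil hcomm (not_lt.mp h)]
  let g := (Module.Basis.mk (linearIndependent_boxVector hV hB1 hBm1 hv hB1nil hBm1nil hcomm)
    hspan).repr.symm
  have hg (b : BoxOf lam) : g (Finsupp.single b 1) = boxVector B1 Bm1 v b.1.1 b.1.2 := by
    simp [g]
  have hg' (j k : ℕ) : g (if h : j < lam.part k then
      Finsupp.single (⟨(j, k), h⟩ : BoxOf lam) 1 else 0 : YoungSpace lam) =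
        boxVector B1 Bm1 v j k := by
    split_ifs with h
    · exact hg ⟨(j, k), h⟩
    · rw [map_zero, boxVector_eq_zero_of_part_le hB1nil hBm1nil hcomm (not_lt.mp h)]
  refine ⟨g, fun b => hg b ▸ boxVector_mem hB1 hBm1 hv _ _, ?_, ?_,
    (lt_boxPartition_part_iff _ _ _ 0 0).mpr hv0, hg _⟩
  · refine Finsupp.basisSingleOne.ext fun b => ?_
    simp only [Finsupp.coe_basisSingleOne, LinearMap.comp_apply, LinearEquiv.coe_coe]
    rw [YB1_single, hg', hg, boxVector_succ_left]
  · refine Finsupp.basisSingleOne.ext fun b => ?_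
    simp only [Finsupp.coe_basisSingleOne, LinearMap.comp_apply, LinearEquiv.coe_coe]
    rw [YBm1_single, hg', hg, boxVector_succ_right hcomm]

end BoxPartition

/-- a nonzero finite-dimensional `ℤ`-graded vector space `W = ⊕ V_k` with
commuting operators `B1, Bm1` of degrees `+1, -1` and a stable vector `v ∈ V_0` is
isomorphic, by a grading-preserving isomorphism intertwining the operators and sending
`b_{0,0}` to `v`, to `(V^λ, B_1^λ, B_{-1}^λ, b_{0,0})` for a unique partition `λ`;
in particular `dim V_k = v_k(λ)`, so each type `A_∞` quiver variety for the basic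
representation is either empty or a single point. -/
theorem quiver_variety_point {W : Type*} [AddCommGroup W] [Module ℂ W]
    [FiniteDimensional ℂ W] [Nontrivial W]
    (V : ℤ → Submodule ℂ W) (hdir : DirectSum.IsInternal V)
    (B1 Bm1 : W →ₗ[ℂ] W)
    (hB1 : ∀ k : ℤ, (V k).map B1 ≤ V (k + 1))
    (hBm1 : ∀ k : ℤ, (V k).map Bm1 ≤ V (k - 1))
    (hcomm : B1 ∘ₗ Bm1 = Bm1 ∘ₗ B1)
    (v : W) (hv : v ∈ V 0)
    (hstab : ∀ S : Submodule ℂ W,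
      (∀ x ∈ S, B1 x ∈ S) → (∀ x ∈ S, Bm1 x ∈ S) → v ∈ S → S = ⊤) :
    (∃ lam : PartitionSeq, IsYoungIso V B1 Bm1 v lam) ∧
    (∀ lam lam' : PartitionSeq,
      IsYoungIso V B1 Bm1 v lam → IsYoungIso V B1 Bm1 v lam' → lam = lam') ∧
    (∀ lam : PartitionSeq, IsYoungIso V B1 Bm1 v lam →
      ∀ k : ℤ, Module.finrank ℂ (V k) = boxCount lam k) := by
  have hBm1' : ∀ k, (V k).map Bm1 ≤ V (k + -1) := by simpa only [← sub_eq_add_neg] using hBm1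
  have hB1nil := isNilpotent_of_map_le_shift hdir one_ne_zero hB1
  have hBm1nil := isNilpotent_of_map_le_shift hdir (by norm_num) hBm1'
  have hv0 : v ≠ 0 := by
    rintro rfl
    exact bot_ne_top (hstab ⊥ (by simp) (by simp) (Submodule.zero_mem ⊥))
  refine ⟨⟨_, isYoungIso_boxPartition hdir.submodule_iSupIndep hB1 hBm1' hv hv0 hB1nil hBm1nil
    hcomm hstab⟩, fun _ _ h h' => h.unique h', fun _ h => h.finrank_eq_boxCount hdir⟩
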